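/- arXiv:2204.01304 — 2 statements merged into one kernel-verified Lean document; each statement's English description precedes it below -/
import Mathlib

section
/- Let S={f_1,...,f_m} be a self-similar IFS on ℝ^d with contraction ratios c_1,...,c_m, attractor K_S, and let μ be an associated self-similar measure. Fix x ∈ K_S. Then the sequence of balls (B(f_i̲(x), 3|K_S| c_i̲))_{i̲∈Λ*}, indexed by all finite words i̲ over Λ={1,...,m} (with f_i̲ and c_i̲ the corresponding compositions and products), is μ-asymptotically covering. -/
open MeasureTheory Metric Set Filter
open scoped ENNReal Topology

/-- The composition `f_{i_1} ∘ ... ∘ f_{i_k}` associated with a word `w = (i_1,...,i_k)`. -/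
def wordMap {d m : ℕ} (f : Fin m → (Fin d → ℝ) → (Fin d → ℝ)) (w : List (Fin m)) :
    (Fin d → ℝ) → (Fin d → ℝ) :=
  w.foldr (fun i g => f i ∘ g) id

/-- The ball `B(f_w(x), 3 |K| c_w)` associated with a word `w`. -/
noncomputable def wordBall {d m : ℕ} (f : Fin m → (Fin d → ℝ) → (Fin d → ℝ))
    (cr : Fin m → ℝ) (K : Set (Fin d → ℝ)) (x : Fin d → ℝ) (w : List (Fin m)) :
    Set (Fin d → ℝ) :=
  closedBall (wordMap f w x) (3 * Metric.diam K * (w.map cr).prod)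

namespace Stmt18Aux

variable {d m : ℕ}

/-- product of probabilities along a word, in `ℝ≥0∞`. -/
noncomputable def Pw (p : Fin m → ℝ) (w : List (Fin m)) : ℝ≥0∞ :=
  (w.map fun i => ENNReal.ofReal (p i)).prod

@[simp] lemma Pw_nil (p : Fin m → ℝ) : Pw p ([] : List (Fin m)) = 1 := rfl

@[simp] lemma Pw_cons (p : Fin m → ℝ) (i : Fin m) (w : List (Fin m)) :
    Pw p (i :: w) = ENNReal.ofReal (p i) * Pw p w := by
  simp [Pw]

@[simp] lemma wordMap_nil (f : Fin m → (Fin d → ℝ) → (Fin d → ℝ)) :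
    wordMap f ([] : List (Fin m)) = id := rfl

@[simp] lemma wordMap_cons (f : Fin m → (Fin d → ℝ) → (Fin d → ℝ)) (i : Fin m)
    (w : List (Fin m)) : wordMap f (i :: w) = f i ∘ wordMap f w := rfl

section Words

variable (f : Fin m → (Fin d → ℝ) → (Fin d → ℝ)) (cr : Fin m → ℝ)

lemma wordMap_dist (hsim : ∀ i y z, dist (f i y) (f i z) = cr i * dist y z)
    (w : List (Fin m)) (y z : Fin d → ℝ) :
    dist (wordMap f w y) (wordMap f w z) = (w.map cr).prod * dist y z := by
  induction w with
  | nil => simp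
  | cons i w ih => simp [hsim, ih, mul_assoc]

lemma wordMap_image_subset {K : Set (Fin d → ℝ)} (hKattr : K = ⋃ i, f i '' K)
    (w : List (Fin m)) : wordMap f w '' K ⊆ K := by
  induction w with
  | nil => simp
  | cons i w ih =>
    intro y hy
    rcases hy with ⟨z, hz, rfl⟩
    have h1 : wordMap f w z ∈ K := ih ⟨z, hz, rfl⟩
    have : f i (wordMap f w z) ∈ f i '' K := ⟨_, h1, rfl⟩
    rw [hKattr]
    exact Set.mem_iUnion.2 ⟨i, this⟩

lemma f_measurable (hsim : ∀ i y z, dist (f i y) (f i z) = cr i * dist y z)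
    (hcr : ∀ i, 0 < cr i ∧ cr i < 1) (i : Fin m) : Measurable (f i) := by
  have : LipschitzWith (Real.toNNReal (cr i)) (f i) := by
    apply LipschitzWith.of_dist_le_mul
    intro y z
    rw [hsim, Real.coe_toNNReal _ (hcr i).1.le]
  exact this.continuous.measurable

lemma wordMap_measurable (hsim : ∀ i y z, dist (f i y) (f i z) = cr i * dist y z)
    (hcr : ∀ i, 0 < cr i ∧ cr i < 1) (w : List (Fin m)) : Measurable (wordMap f w) := by
  induction w with
  | nil => simpa using measurable_id
  | cons i w ih => exact (f_measurable f cr hsim hcr i).comp ih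

lemma cprod_pos (hcr : ∀ i, 0 < cr i ∧ cr i < 1) (w : List (Fin m)) :
    0 < (w.map cr).prod := by
  apply List.prod_pos
  intro a ha
  rcases List.mem_map.1 ha with ⟨i, _, rfl⟩
  exact (hcr i).1

lemma cmin_pow_le_cprod {cmin : ℝ} (hc0 : 0 < cmin) (hle : ∀ i, cmin ≤ cr i)
    (w : List (Fin m)) : cmin ^ w.length ≤ (w.map cr).prod := by
  induction w with
  | nil => simp
  | cons i w ih =>
    simp only [List.map_cons, List.prod_cons, List.length_cons, pow_succ]
    rw [mul_comm (cmin ^ w.length) cmin]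
    exact mul_le_mul (hle i) ih (pow_pos hc0 _).le (hc0.trans_le (hle i)).le

end Words

/-- the stopping-time section of the word tree at scale `ρ`, with fuel `n`. -/
noncomputable def sect (cr : Fin m → ℝ) : ℕ → ℝ → Finset (List (Fin m))
  | 0, ρ => if 1 ≤ ρ then {([] : List (Fin m))} else ∅
  | n + 1, ρ =>
    if 1 ≤ ρ then {([] : List (Fin m))}
    else Finset.univ.biUnion fun i => (sect cr n (ρ / cr i)).image (List.cons i)

section Sect

variable (cr : Fin m → ℝ) {cmin cM : ℝ}

lemma sect_one_le {n : ℕ} {ρ : ℝ} (h : 1 ≤ ρ) : sect cr n ρ = {([] : List (Fin m))} := by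
  cases n <;> simp [sect, h]

lemma sect_cprod (hm0 : 0 < m) (hcr : ∀ i, 0 < cr i ∧ cr i < 1)
    (hc0 : 0 < cmin) (hle : ∀ i, cmin ≤ cr i) :
    ∀ (n : ℕ) (ρ : ℝ), ∀ w ∈ sect cr n ρ,
      (ρ < 1 → (w.map cr).prod ≤ ρ) ∧ (ρ < 1 / cmin → cmin * ρ < (w.map cr).prod) := by
  have hmin1 : cmin < 1 := lt_of_le_of_lt (hle ⟨0, hm0⟩) (hcr _).2
  intro n
  induction n with
  | zero =>
    intro ρ w hw
    by_cases h : 1 ≤ ρ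
    · rw [sect_one_le cr h, Finset.mem_singleton] at hw
      subst hw
      refine ⟨fun h1 => absurd h (not_le.2 h1), fun h2 => ?_⟩
      simp only [List.map_nil, List.prod_nil]
      calc cmin * ρ < cmin * (1 / cmin) := by
            exact (mul_lt_mul_iff_right₀ hc0).2 h2
      _ = 1 := by field_simp
    · simp [sect, h] at hw
  | succ n ih =>
    intro ρ w hw
    by_cases h : 1 ≤ ρ
    · rw [sect_one_le cr h, Finset.mem_singleton] at hw
      subst hw
      refine ⟨fun h1 => absurd h (not_le.2 h1), fun h2 => ?_⟩
      simp only [List.map_nil, List.prod_nil]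
      calc cmin * ρ < cmin * (1 / cmin) := (mul_lt_mul_iff_right₀ hc0).2 h2
      _ = 1 := by field_simp
    · push_neg at h
      rw [show sect cr (n+1) ρ = Finset.univ.biUnion
            (fun i => (sect cr n (ρ / cr i)).image (List.cons i)) by
          simp [sect, not_le.2 h]] at hw
      rcases Finset.mem_biUnion.1 hw with ⟨i, _, hwi⟩
      rcases Finset.mem_image.1 hwi with ⟨w', hw', rfl⟩
      have hcri := (hcr i).1
      by_cases h2 : 1 ≤ ρ / cr i
      · rw [sect_one_le cr h2, Finset.mem_singleton] at hw'
        subst hw'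
        simp only [List.map_cons, List.map_nil, List.prod_cons, List.prod_nil, mul_one]
        constructor
        · intro _
          exact (one_le_div hcri).1 h2
        · intro _
          calc cmin * ρ < cmin * 1 := (mul_lt_mul_iff_right₀ hc0).2 h
          _ = cmin := mul_one cmin
          _ ≤ cr i := hle i
      · push_neg at h2
        obtain ⟨ih1, ih2⟩ := ih (ρ / cr i) w' hw'
        have h1' : (w'.map cr).prod ≤ ρ / cr i := ih1 h2
        have h2' : cmin * (ρ / cr i) < (w'.map cr).prod := by
          apply ih2
          calc ρ / cr i < 1 := h2
          _ < 1 / cmin := by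
            rw [lt_div_iff₀ hc0, one_mul]
            exact hmin1
        simp only [List.map_cons, List.prod_cons]
        constructor
        · intro _
          calc cr i * (w'.map cr).prod ≤ cr i * (ρ / cr i) := by
                exact (mul_le_mul_iff_right₀ hcri).2 h1'
          _ = ρ := by field_simp
        · intro _
          calc cmin * ρ = cr i * (cmin * (ρ / cr i)) := by field_simp [hcri.ne']
          _ < cr i * (w'.map cr).prod := (mul_lt_mul_iff_right₀ hcri).2 h2'

lemma sect_cover (hcr : ∀ i, 0 < cr i ∧ cr i < 1)
    (f : Fin m → (Fin d → ℝ) → (Fin d → ℝ)) {K : Set (Fin d → ℝ)}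
    (hKattr : K = ⋃ i, f i '' K)
    (hcM0 : 0 < cM) (hcM : ∀ i, cr i ≤ cM) :
    ∀ (n : ℕ) (ρ : ℝ), cM ^ n ≤ ρ →
      K ⊆ ⋃ w ∈ sect cr n ρ, wordMap f w '' K := by
  intro n
  induction n with
  | zero =>
    intro ρ hρ
    rw [sect_one_le cr (by simpa using hρ)]
    intro y hy
    simp only [Finset.mem_singleton, Set.mem_iUnion]
    exact ⟨[], rfl, by simpa using hy⟩
  | succ n ih =>
    intro ρ hρ
    by_cases h : 1 ≤ ρ
    · rw [sect_one_le cr h]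
      intro y hy
      simp only [Finset.mem_singleton, Set.mem_iUnion]
      exact ⟨[], rfl, by simpa using hy⟩
    · intro y hy
      rw [hKattr] at hy
      rcases Set.mem_iUnion.1 hy with ⟨i, z, hz, rfl⟩
      have hinv : cM ^ n ≤ ρ / cr i := by
        rw [le_div_iff₀ (hcr i).1]
        calc cM ^ n * cr i ≤ cM ^ n * cM := by
              exact mul_le_mul_of_nonneg_left (hcM i) (pow_nonneg hcM0.le n)
        _ = cM ^ (n + 1) := (pow_succ cM n).symm
        _ ≤ ρ := hρ
      rcases Set.mem_iUnion.1 (ih (ρ / cr i) hinv hz) with ⟨w', hw'⟩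
      rcases Set.mem_iUnion.1 hw' with ⟨hw'mem, z', hz', hzz⟩
      refine Set.mem_iUnion.2 ⟨i :: w', Set.mem_iUnion.2 ⟨?_, ⟨z', hz', ?_⟩⟩⟩
      · rw [show sect cr (n+1) ρ = Finset.univ.biUnion
            (fun j => (sect cr n (ρ / cr j)).image (List.cons j)) by
          simp [sect, h]]
        exact Finset.mem_biUnion.2 ⟨i, Finset.mem_univ i,
          Finset.mem_image.2 ⟨w', hw'mem, rfl⟩⟩
      · simp [hzz]

lemma sect_measure (μ : Measure (Fin d → ℝ)) [IsProbabilityMeasure μ]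
    (f : Fin m → (Fin d → ℝ) → (Fin d → ℝ)) (p : Fin m → ℝ)
    (hcr : ∀ i, 0 < cr i ∧ cr i < 1)
    (hmeas : ∀ i, Measurable (f i))
    (hss : ∀ E : Set (Fin d → ℝ), MeasurableSet E →
      μ E = ∑ i, ENNReal.ofReal (p i) * μ (f i ⁻¹' E))
    (hcM0 : 0 < cM) (hcM : ∀ i, cr i ≤ cM) :
    ∀ (n : ℕ) (ρ : ℝ), cM ^ n ≤ ρ →
      ∀ E : Set (Fin d → ℝ), MeasurableSet E →
        μ E = ∑ w ∈ sect cr n ρ, Pw p w * μ (wordMap f w ⁻¹' E) := by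
  intro n
  induction n with
  | zero =>
    intro ρ hρ E _
    rw [sect_one_le cr (by simpa using hρ)]
    simp
  | succ n ih =>
    intro ρ hρ E hE
    by_cases h : 1 ≤ ρ
    · rw [sect_one_le cr h]
      simp
    · rw [show sect cr (n+1) ρ = Finset.univ.biUnion
          (fun i => (sect cr n (ρ / cr i)).image (List.cons i)) by
        simp [sect, h]]
      rw [Finset.sum_biUnion]
      · rw [hss E hE]
        refine Finset.sum_congr rfl fun i _ => ?_
        rw [Finset.sum_image (fun a _ b _ hab => List.tail_eq_of_cons_eq hab)]
        have hinv : cM ^ n ≤ ρ / cr i := by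
          rw [le_div_iff₀ (hcr i).1]
          calc cM ^ n * cr i ≤ cM ^ n * cM :=
                mul_le_mul_of_nonneg_left (hcM i) (pow_nonneg hcM0.le n)
          _ = cM ^ (n + 1) := (pow_succ cM n).symm
          _ ≤ ρ := hρ
        rw [ih (ρ / cr i) hinv (f i ⁻¹' E) (hE.preimage (hmeas i)), Finset.mul_sum]
        refine Finset.sum_congr rfl fun w' _ => ?_
        rw [Pw_cons, wordMap_cons, Set.preimage_comp, mul_assoc]
      · intro i _ j _ hij
        simp only [Finset.disjoint_left]
        intro w hwi hwj
        rcases Finset.mem_coe.1 hwi with h1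
        rcases Finset.mem_image.1 (by exact_mod_cast h1) with ⟨a, _, rfl⟩
        rcases Finset.mem_image.1 (by exact_mod_cast (Finset.mem_coe.1 hwj)) with ⟨b, _, hab⟩
        exact hij (List.head_eq_of_cons_eq hab).symm

end Sect

open Classical in
/-- greedy selection of a disjoint weighted subfamily. -/
lemma greedy_select {X α : Type*} [MeasurableSpace X] [DecidableEq α] (μ : Measure X)
    (B : α → Set X) (hB : ∀ a, MeasurableSet (B a)) (v : α → ℝ≥0∞) (N : ℕ) :
    ∀ R : Finset α,
      (∀ a ∈ R, (R.filter fun b => ¬ Disjoint (B a) (B b)).card ≤ N) →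
      (∀ a ∈ R, v a ≤ μ (B a)) →
      ∃ S : Finset α, S ⊆ R ∧
        ((S : Set α).Pairwise fun a b => Disjoint (B a) (B b)) ∧
        ∑ a ∈ R, v a ≤ N * μ (⋃ a ∈ S, B a) := by
  intro R
  induction R using Finset.strongInduction with
  | _ R ih =>
    intro hdeg hv
    by_cases hR : ∑ a ∈ R, v a = 0
    · exact ⟨∅, Finset.empty_subset R, by simp, by rw [hR]; exact zero_le⟩
    · have hRne : R.Nonempty := by
        rcases Finset.eq_empty_or_nonempty R with h | h
        · exact absurd (by simp [h]) hR
        · exact h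
      obtain ⟨a₀, ha₀R, ha₀max⟩ := R.exists_max_image v hRne
      have hva₀ : v a₀ ≠ 0 := by
        intro h0
        exact hR (Finset.sum_eq_zero fun a ha => le_antisymm (h0 ▸ ha₀max a ha) (zero_le))
      have hBa₀ : ¬ Disjoint (B a₀) (B a₀) := by
        intro hdis
        rw [disjoint_self] at hdis
        have : v a₀ ≤ μ (B a₀) := hv a₀ ha₀R
        rw [hdis] at this
        simp only [Set.bot_eq_empty, measure_empty, le_zero_iff] at this
        exact hva₀ this
      set Nbh := R.filter (fun b => ¬ Disjoint (B a₀) (B b)) with hNbh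
      have ha₀N : a₀ ∈ Nbh := Finset.mem_filter.2 ⟨ha₀R, hBa₀⟩
      set R' := R \ Nbh with hR'
      have hR'ss : R' ⊂ R := by
        refine Finset.ssubset_iff_of_subset (Finset.sdiff_subset) |>.2 ⟨a₀, ha₀R, ?_⟩
        simp [hR', ha₀N]
      obtain ⟨S, hSR', hSdisj, hsum'⟩ := ih R' hR'ss
        (fun a ha => le_trans (Finset.card_le_card
          (Finset.filter_subset_filter _ Finset.sdiff_subset))
          (hdeg a (Finset.sdiff_subset ha)))
        (fun a ha => hv a (Finset.sdiff_subset ha))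
      have ha₀S : a₀ ∉ S := fun h => by
        have := hSR' h
        rw [hR', Finset.mem_sdiff] at this
        exact this.2 ha₀N
      refine ⟨insert a₀ S, ?_, ?_, ?_⟩
      · exact Finset.insert_subset ha₀R (hSR'.trans Finset.sdiff_subset)
      · have hkey : ∀ b ∈ S, Disjoint (B a₀) (B b) := by
          intro b hbS
          have hb : b ∈ R' := hSR' hbS
          rw [hR', Finset.mem_sdiff, hNbh, Finset.mem_filter] at hb
          by_contra hcon
          exact hb.2 ⟨hb.1, hcon⟩
        rw [Finset.coe_insert]
        intro a ha b hb hab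
        rcases Set.mem_insert_iff.1 ha with rfl | ha'
        · rcases Set.mem_insert_iff.1 hb with rfl | hb'
          · exact absurd rfl hab
          · exact hkey b hb'
        · rcases Set.mem_insert_iff.1 hb with rfl | hb'
          · exact (hkey a ha').symm
          · exact hSdisj ha' hb' hab
      · have hsplit : ∑ a ∈ R, v a = ∑ a ∈ R', v a + ∑ a ∈ Nbh, v a := by
          rw [hR']
          exact (Finset.sum_sdiff (Finset.filter_subset _ _)).symm
        have hNsum : ∑ a ∈ Nbh, v a ≤ (N : ℝ≥0∞) * v a₀ := by
          calc ∑ a ∈ Nbh, v a ≤ Nbh.card • v a₀ :=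
                Finset.sum_le_card_nsmul _ _ _ (fun a ha =>
                  ha₀max a (Finset.filter_subset _ _ ha))
          _ = (Nbh.card : ℝ≥0∞) * v a₀ := by rw [nsmul_eq_mul]
          _ ≤ (N : ℝ≥0∞) * v a₀ := by
                gcongr
                exact_mod_cast hdeg a₀ ha₀R
        have hdisjU : Disjoint (B a₀) (⋃ a ∈ S, B a) := by
          rw [Set.disjoint_iUnion_right]
          intro b
          rw [Set.disjoint_iUnion_right]
          intro hbS
          have hb : b ∈ R' := hSR' hbS
          rw [hR', Finset.mem_sdiff, hNbh, Finset.mem_filter] at hb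
          by_contra hcon
          exact hb.2 ⟨hb.1, hcon⟩
        have hmeasU : MeasurableSet (⋃ a ∈ S, B a) :=
          MeasurableSet.biUnion S.countable_toSet (fun a _ => hB a)
        have hunion : μ (⋃ a ∈ insert a₀ S, B a) = μ (B a₀) + μ (⋃ a ∈ S, B a) := by
          rw [Finset.set_biUnion_insert]
          exact measure_union hdisjU hmeasU
        rw [hsplit, hunion, mul_add]
        have h1 : ∑ a ∈ Nbh, v a ≤ (N : ℝ≥0∞) * μ (B a₀) :=
          hNsum.trans (by gcongr; exact hv a₀ ha₀R)
        calc ∑ a ∈ R', v a + ∑ a ∈ Nbh, v a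
            ≤ (N : ℝ≥0∞) * μ (⋃ a ∈ S, B a) + (N : ℝ≥0∞) * μ (B a₀) :=
              add_le_add hsum' h1
        _ = (N : ℝ≥0∞) * μ (B a₀) + (N : ℝ≥0∞) * μ (⋃ a ∈ S, B a) := by ring

lemma abs_sub_lt_of_floor_div_eq {s u v : ℝ} (hs : 0 < s) (h : ⌊u / s⌋ = ⌊v / s⌋) :
    |u - v| < s := by
  have h1 : |u / s - v / s| < 1 := by
    have a1 := Int.floor_le (u / s); have a2 := Int.lt_floor_add_one (u / s)
    have b1 := Int.floor_le (v / s); have b2 := Int.lt_floor_add_one (v / s)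
    rw [h] at a1 a2
    rw [abs_lt]; constructor <;> linarith
  have h2 : u - v = s * (u / s - v / s) := by field_simp
  rw [h2, abs_mul, abs_of_pos hs]
  calc s * |u / s - v / s| < s * 1 := (mul_lt_mul_iff_right₀ hs).2 h1
  _ = s := mul_one s

lemma floor_mem_Icc_of_abs_sub_le {u v c : ℝ} (h : |u - v| ≤ c) {N : ℕ} (hN : c ≤ N) :
    ⌊v⌋ ∈ Finset.Icc (⌊u⌋ - (N : ℤ)) (⌊u⌋ + (N : ℤ)) := by
  rw [Finset.mem_Icc]
  have hab := abs_le.1 h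
  constructor
  · rw [Int.le_floor]
    push_cast
    linarith [Int.floor_le u, hab.2]
  · calc ⌊v⌋ ≤ ⌊u + (N : ℤ)⌋ := Int.floor_le_floor (by push_cast; linarith [hab.1])
    _ = ⌊u⌋ + N := Int.floor_add_intCast u N

end Stmt18Aux


open Stmt18Aux in
/-- for a self-similar IFS with attractor `K_S` and associated self-similar
measure `μ`, and `x ∈ K_S`, the family of balls `B(f_w(x), 3 |K_S| c_w)`, indexed by all
finite words `w`, is `μ`-asymptotically covering (lower index bound read on word length). -/
theorem stmt18 {d : ℕ} (μ : Measure (Fin d → ℝ)) [IsProbabilityMeasure μ]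
    (m : ℕ) (f : Fin m → (Fin d → ℝ) → (Fin d → ℝ)) (cr p : Fin m → ℝ)
    (hm : 2 ≤ m)
    (hcr : ∀ i, 0 < cr i ∧ cr i < 1)
    (hsim : ∀ i y z, dist (f i y) (f i z) = cr i * dist y z)
    (hp : ∀ i, 0 < p i) (hp1 : ∑ i, p i = 1)
    (hss : μ = ∑ i, ENNReal.ofReal (p i) • Measure.map (f i) μ)
    (K : Set (Fin d → ℝ)) (hKcomp : IsCompact K) (hKne : K.Nonempty)
    (hKattr : K = ⋃ i, f i '' K) (hμK : μ K = 1)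
    (x : Fin d → ℝ) (hx : x ∈ K) :
    ∃ C : ℝ≥0∞, 0 < C ∧ ∀ Ω : Set (Fin d → ℝ), IsOpen Ω → ∀ g : ℕ,
      ∃ F : Finset (List (Fin m)),
        (∀ w ∈ F, g ≤ w.length) ∧
        (∀ w ∈ F, wordBall f cr K x w ⊆ Ω) ∧
        ((F : Set (List (Fin m))).Pairwise fun w w' =>
          Disjoint (wordBall f cr K x w) (wordBall f cr K x w')) ∧
        C * μ Ω ≤ μ (⋃ w ∈ F, wordBall f cr K x w) := by
  classical
  have hm0 : 0 < m := by omega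
  haveI : Nonempty (Fin m) := ⟨⟨0, hm0⟩⟩
  -- extremal contraction ratios
  obtain ⟨imin, -, himin⟩ := Finset.exists_min_image Finset.univ cr Finset.univ_nonempty
  obtain ⟨imax, -, himax⟩ := Finset.exists_max_image Finset.univ cr Finset.univ_nonempty
  set cmin := cr imin with hcmindef
  set cM := cr imax with hcMdef
  have hcmin0 : 0 < cmin := (hcr imin).1
  have hcmin1 : cmin < 1 := (hcr imin).2
  have hcminle : ∀ i, cmin ≤ cr i := fun i => himin i (Finset.mem_univ i)
  have hcM0 : 0 < cM := (hcr imax).1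
  have hcM1 : cM < 1 := (hcr imax).2
  have hcMle : ∀ i, cr i ≤ cM := fun i => himax i (Finset.mem_univ i)
  -- the constant
  set K₀ : ℕ := ⌈3 / cmin⌉₊ + 1 with hK₀def
  set Δ : ℕ := (2 * K₀ + 1) ^ d with hΔdef
  set C : ℝ≥0∞ := ((2 * (Δ + 1) : ℕ) : ℝ≥0∞)⁻¹ with hCdef
  have hCpos : 0 < C := ENNReal.inv_pos.2 (ENNReal.natCast_ne_top _)
  have hC1 : C ≤ 1 := by
    rw [hCdef]
    apply ENNReal.inv_le_one.2
    exact_mod_cast Nat.one_le_iff_ne_zero.2 (by positivity)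
  refine ⟨C, hCpos, ?_⟩
  intro Ω hΩ g
  -- measurability facts
  have hmeasf : ∀ i, Measurable (f i) := f_measurable f cr hsim hcr
  have hssE : ∀ E : Set (Fin d → ℝ), MeasurableSet E →
      μ E = ∑ i, ENNReal.ofReal (p i) * μ (f i ⁻¹' E) := by
    intro E hE
    conv_lhs => rw [hss]
    rw [Measure.finset_sum_apply]
    exact Finset.sum_congr rfl fun i _ => by
      rw [Measure.smul_apply, smul_eq_mul, Measure.map_apply (hmeasf i) hE]
  have hKmeas : MeasurableSet K := hKcomp.isClosed.measurableSet
  have hKc : μ Kᶜ = 0 := by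
    rw [measure_compl hKmeas (measure_ne_top μ K), hμK, measure_univ]
    simp
  by_cases hμΩ : μ Ω = 0
  · exact ⟨∅, by simp, by simp, by simp, by simp [hμΩ]⟩
  by_cases hD : Metric.diam K = 0
  · -- degenerate case : K = {x}
    have hKsub : K ⊆ {x} := by
      intro y hy
      have h1 : dist y x ≤ Metric.diam K := Metric.dist_le_diam_of_mem hKcomp.isBounded hy hx
      rw [hD] at h1
      simpa [Set.mem_singleton_iff] using le_antisymm h1 dist_nonneg
    have hxΩ : x ∈ Ω := by
      by_contra hxΩ
      apply hμΩ
      have h1 : Ω ⊆ Kᶜ := fun y hy hyK => hxΩ (by rwa [hKsub hyK] at hy)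
      exact le_antisymm ((measure_mono h1).trans hKc.le) (zero_le)
    set w₀ : List (Fin m) := List.replicate g imin with hw₀
    have hball : wordBall f cr K x w₀ = {x} := by
      have hcenter : wordMap f w₀ x = x :=
        hKsub (wordMap_image_subset f hKattr w₀ ⟨x, hx, rfl⟩)
      rw [wordBall, hD, hcenter]
      simp [closedBall_zero]
    refine ⟨{w₀}, by simp [hw₀], ?_, by simp, ?_⟩
    · intro w hw
      rw [Finset.mem_singleton] at hw
      subst hw
      rw [hball]
      exact Set.singleton_subset_iff.2 hxΩ
    · have h1 : (1 : ℝ≥0∞) ≤ μ {x} := hμK ▸ measure_mono hKsub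
      calc C * μ Ω ≤ 1 * 1 := mul_le_mul' hC1 prob_le_one
      _ = 1 := one_mul 1
      _ ≤ μ {x} := h1
      _ = μ (⋃ w ∈ ({w₀} : Finset (List (Fin m))), wordBall f cr K x w) := by
          simp [hball]
  -- main case
  have hDpos : 0 < Metric.diam K := lt_of_le_of_ne Metric.diam_nonneg (Ne.symm hD)
  -- a compact subset of Ω carrying half the mass
  obtain ⟨A, hAΩ, hAcomp, hAμ⟩ := hΩ.measurableSet.exists_isCompact_lt_add
    (measure_ne_top μ Ω) (ε := μ Ω / 2)
    (by simp [ENNReal.div_eq_zero_iff, hμΩ, measure_ne_top μ Ω])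
  have hμΩ2 : μ Ω / 2 ≠ ⊤ :=
    (lt_of_le_of_lt ENNReal.half_le_self (measure_lt_top μ Ω)).ne
  have hhalf : μ Ω / 2 ≤ μ A := by
    have h := hAμ.le
    nth_rewrite 1 [← ENNReal.add_halves (μ Ω)] at h
    exact (ENNReal.add_le_add_iff_right hμΩ2).1 h
  have hμΩA : μ Ω ≤ 2 * μ A := by
    calc μ Ω = 2 * (μ Ω / 2) := by
          rw [ENNReal.mul_div_cancel' (by norm_num) (by norm_num)]
    _ ≤ 2 * μ A := by gcongr
  -- thickening of A inside Ω
  obtain ⟨ε, hε0, hεsub⟩ := hAcomp.exists_thickening_subset_open hΩ hAΩ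
  -- the scale ρ
  set ρ : ℝ := min (cmin ^ (g + 1)) (ε / (8 * Metric.diam K)) with hρdef
  have hρ0 : 0 < ρ := lt_min (pow_pos hcmin0 _) (div_pos hε0 (by positivity))
  have hρg : ρ < cmin ^ g := by
    calc ρ ≤ cmin ^ (g + 1) := min_le_left _ _
    _ = cmin ^ g * cmin := pow_succ cmin g
    _ < cmin ^ g * 1 := by
        exact (mul_lt_mul_iff_right₀ (pow_pos hcmin0 g)).2 hcmin1
    _ = cmin ^ g := mul_one _
  have hρ1 : ρ < 1 := lt_of_lt_of_le hρg (pow_le_one₀ hcmin0.le hcmin1.le)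
  have hρε : 4 * Metric.diam K * ρ < ε := by
    have h1 : ρ ≤ ε / (8 * Metric.diam K) := min_le_right _ _
    have h2 : 4 * Metric.diam K * ρ ≤ 4 * Metric.diam K * (ε / (8 * Metric.diam K)) := by
      apply mul_le_mul_of_nonneg_left h1 (by positivity)
    calc 4 * Metric.diam K * ρ ≤ 4 * Metric.diam K * (ε / (8 * Metric.diam K)) := h2
    _ = ε / 2 := by field_simp; ring
    _ < ε := by linarith
  -- the fuel
  obtain ⟨n, hn⟩ := exists_pow_lt_of_lt_one hρ0 hcM1
  have hninv : cM ^ n ≤ ρ := hn.le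
  have hsect := sect_measure cr μ f p hcr hmeasf hssE hcM0 hcMle n ρ hninv
  -- basic properties of the section
  have hcw_le : ∀ w ∈ sect cr n ρ, (w.map cr).prod ≤ ρ := fun w hw =>
    (sect_cprod cr hm0 hcr hcmin0 hcminle n ρ w hw).1 hρ1
  have hcw_gt : ∀ w ∈ sect cr n ρ, cmin * ρ < (w.map cr).prod := by
    intro w hw
    apply (sect_cprod cr hm0 hcr hcmin0 hcminle n ρ w hw).2
    calc ρ < 1 := hρ1
    _ ≤ 1 / cmin := by
        rw [le_div_iff₀ hcmin0, one_mul]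
        exact hcmin1.le
  have hlen : ∀ w ∈ sect cr n ρ, g ≤ w.length := by
    intro w hw
    have h1 : cmin ^ w.length ≤ (w.map cr).prod := cmin_pow_le_cprod cr hcmin0 hcminle w
    have h2 : cmin ^ w.length < cmin ^ g := lt_of_le_of_lt (h1.trans (hcw_le w hw)) hρg
    exact le_of_lt ((pow_lt_pow_iff_right_of_lt_one₀ hcmin0 hcmin1).1 h2)
  have hdiam : ∀ (w : List (Fin m)), ∀ y ∈ K, ∀ z ∈ K,
      dist (wordMap f w y) (wordMap f w z) ≤ (w.map cr).prod * Metric.diam K := by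
    intro w y hy z hz
    rw [wordMap_dist f cr hsim]
    exact mul_le_mul_of_nonneg_left
      (Metric.dist_le_diam_of_mem hKcomp.isBounded hy hz)
      (cprod_pos cr hcr w).le
  -- the stopped words meeting A
  set W := (sect cr n ρ).filter (fun w => (wordMap f w '' K ∩ A).Nonempty) with hWdef
  have hWsect : W ⊆ sect cr n ρ := Finset.filter_subset _ _
  -- the selected balls are inside Ω
  have hball_sub : ∀ w ∈ W, wordBall f cr K x w ⊆ Ω := by
    intro w hw y hy
    obtain ⟨hwsect, a, ⟨⟨k, hk, hka⟩, haA⟩⟩ := Finset.mem_filter.1 hw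
    apply hεsub
    rw [Metric.mem_thickening_iff]
    refine ⟨a, haA, ?_⟩
    rw [wordBall, Metric.mem_closedBall] at hy
    have h1 : dist (wordMap f w x) a ≤ (w.map cr).prod * Metric.diam K := by
      rw [← hka]; exact hdiam w x hx k hk
    have h2 : (w.map cr).prod ≤ ρ := hcw_le w hwsect
    calc dist y a ≤ dist y (wordMap f w x) + dist (wordMap f w x) a := dist_triangle _ _ _
    _ ≤ 3 * Metric.diam K * (w.map cr).prod + (w.map cr).prod * Metric.diam K :=
        add_le_add hy h1
    _ ≤ 4 * Metric.diam K * ρ := by nlinarith [hDpos.le, (cprod_pos cr hcr w).le]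
    _ < ε := hρε
  -- mass bound from below
  have hμA_le : μ A ≤ ∑ w ∈ W, Pw p w := by
    rw [hsect A hAcomp.isClosed.measurableSet]
    rw [← Finset.sum_filter_add_sum_filter_not (sect cr n ρ)
      (fun w => (wordMap f w '' K ∩ A).Nonempty)]
    have h2 : ∑ w ∈ (sect cr n ρ).filter
        (fun w => ¬ (wordMap f w '' K ∩ A).Nonempty), Pw p w * μ (wordMap f w ⁻¹' A) = 0 := by
      apply Finset.sum_eq_zero
      intro w hw
      obtain ⟨hwsect, hwne⟩ := Finset.mem_filter.1 hw
      have h3 : wordMap f w ⁻¹' A ⊆ Kᶜ := by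
        intro y hy hyK
        exact hwne ⟨wordMap f w y, ⟨y, hyK, rfl⟩, hy⟩
      rw [measure_mono_null h3 hKc, mul_zero]
    rw [h2, add_zero]
    apply Finset.sum_le_sum
    intro w _
    calc Pw p w * μ (wordMap f w ⁻¹' A) ≤ Pw p w * 1 :=
        mul_le_mul_right prob_le_one _
    _ = Pw p w := mul_one _
  -- the grid
  set s0 : ℝ := 2 * Metric.diam K * cmin * ρ with hs0def
  have hs0 : 0 < s0 := by positivity
  set G : List (Fin m) → (Fin d → ℤ) := fun w j => ⌊wordMap f w x j / s0⌋ with hGdef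
  -- absorption
  have habs : ∀ w ∈ W, ∀ w' ∈ W, G w = G w' → (w'.map cr).prod ≤ (w.map cr).prod →
      wordMap f w' '' K ⊆ wordBall f cr K x w := by
    intro w hw w' hw' hGe hcle
    rintro _ ⟨k, hk, rfl⟩
    rw [wordBall, Metric.mem_closedBall]
    have hcenter : dist (wordMap f w' x) (wordMap f w x) ≤ s0 := by
      rw [dist_pi_le_iff hs0.le]
      intro j
      have h1 : ⌊wordMap f w' x j / s0⌋ = ⌊wordMap f w x j / s0⌋ := by
        have := congrFun hGe j
        simp only [hGdef] at this
        exact this.symm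
      rw [Real.dist_eq]
      exact (abs_sub_lt_of_floor_div_eq hs0 h1).le
    have hgt : cmin * ρ < (w.map cr).prod := hcw_gt w (hWsect hw)
    calc dist (wordMap f w' k) (wordMap f w x)
        ≤ dist (wordMap f w' k) (wordMap f w' x) + dist (wordMap f w' x) (wordMap f w x) :=
          dist_triangle _ _ _
    _ ≤ (w'.map cr).prod * Metric.diam K + s0 := add_le_add (hdiam w' k hk x hx) hcenter
    _ ≤ 3 * Metric.diam K * (w.map cr).prod := by
        rw [hs0def]
        nlinarith [hDpos.le, (cprod_pos cr hcr w').le, hgt, hcle]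
  -- classes and representatives
  set Z := W.image G with hZdef
  have hrepex : ∀ z : Fin d → ℤ, ∃ w : List (Fin m), z ∈ Z →
      (w ∈ W ∧ G w = z) ∧
      ∑ w' ∈ W.filter (fun w' => G w' = z), Pw p w' ≤ μ (wordBall f cr K x w) := by
    intro z
    by_cases hz : z ∈ Z
    swap
    · exact ⟨[], fun h => absurd h hz⟩
    obtain ⟨w₁, hw₁, hGw₁⟩ := Finset.mem_image.1 hz
    have hclne : (W.filter (fun w' => G w' = z)).Nonempty :=
      ⟨w₁, Finset.mem_filter.2 ⟨hw₁, hGw₁⟩⟩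
    obtain ⟨w, hwcl, hwmax⟩ := Finset.exists_max_image _ (fun w => (w.map cr).prod) hclne
    obtain ⟨hwW, hGw⟩ := Finset.mem_filter.1 hwcl
    refine ⟨w, fun _ => ⟨⟨hwW, hGw⟩, ?_⟩⟩
    rw [hsect (wordBall f cr K x w)
      (show MeasurableSet (wordBall f cr K x w) from measurableSet_closedBall)]
    calc ∑ w' ∈ W.filter (fun w' => G w' = z), Pw p w'
        ≤ ∑ w' ∈ W.filter (fun w' => G w' = z),
            Pw p w' * μ (wordMap f w' ⁻¹' wordBall f cr K x w) := by
          apply Finset.sum_le_sum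
          intro w' hw'cl
          obtain ⟨hw'W, hGw'⟩ := Finset.mem_filter.1 hw'cl
          have hsub : K ⊆ wordMap f w' ⁻¹' wordBall f cr K x w := fun k hk =>
            habs w hwW w' hw'W (hGw.trans hGw'.symm) (hwmax w' hw'cl) ⟨k, hk, rfl⟩
          have h1 : (1 : ℝ≥0∞) ≤ μ (wordMap f w' ⁻¹' wordBall f cr K x w) :=
            hμK ▸ measure_mono hsub
          calc Pw p w' = Pw p w' * 1 := (mul_one _).symm
          _ ≤ Pw p w' * μ (wordMap f w' ⁻¹' wordBall f cr K x w) := mul_le_mul_right h1 _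
    _ ≤ ∑ w' ∈ sect cr n ρ, Pw p w' * μ (wordMap f w' ⁻¹' wordBall f cr K x w) :=
        Finset.sum_le_sum_of_subset ((Finset.filter_subset _ _).trans hWsect)
  choose rep hrep using hrepex
  -- the greedy selection
  set Bz : (Fin d → ℤ) → Set (Fin d → ℝ) := fun z => wordBall f cr K x (rep z) with hBzdef
  set v : (Fin d → ℤ) → ℝ≥0∞ :=
    fun z => ∑ w' ∈ W.filter (fun w' => G w' = z), Pw p w' with hvdef
  have hZballρ : ∀ z ∈ Z, ∀ y ∈ Bz z,
      dist y (wordMap f (rep z) x) ≤ 3 * Metric.diam K * ρ := by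
    intro z hz y hy
    simp only [hBzdef, wordBall, Metric.mem_closedBall] at hy
    calc dist y (wordMap f (rep z) x) ≤ 3 * Metric.diam K * ((rep z).map cr).prod := hy
    _ ≤ 3 * Metric.diam K * ρ := by
        apply mul_le_mul_of_nonneg_left (hcw_le _ (hWsect ((hrep z hz).1.1))) (by positivity)
  have hdeg : ∀ z ∈ Z, (Z.filter fun z' => ¬ Disjoint (Bz z) (Bz z')).card ≤ Δ + 1 := by
    intro z hz
    have hsub : Z.filter (fun z' => ¬ Disjoint (Bz z) (Bz z')) ⊆
        Fintype.piFinset (fun j => Finset.Icc (z j - (K₀ : ℤ)) (z j + (K₀ : ℤ))) := by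
      intro z' hz'
      obtain ⟨hz'Z, hnd⟩ := Finset.mem_filter.1 hz'
      obtain ⟨y, hy1, hy2⟩ := Set.not_disjoint_iff.1 hnd
      have hGz := (hrep z hz).1.2
      have hGz' := (hrep z' hz'Z).1.2
      have hdistc : dist (wordMap f (rep z) x) (wordMap f (rep z') x)
          ≤ 6 * Metric.diam K * ρ := by
        calc dist (wordMap f (rep z) x) (wordMap f (rep z') x)
            ≤ dist y (wordMap f (rep z) x) + dist y (wordMap f (rep z') x) :=
              dist_triangle_left _ _ _
        _ ≤ 3 * Metric.diam K * ρ + 3 * Metric.diam K * ρ :=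
            add_le_add (hZballρ z hz y hy1) (hZballρ z' hz'Z y hy2)
        _ = 6 * Metric.diam K * ρ := by ring
      rw [Fintype.mem_piFinset]
      intro j
      have hcoord : |wordMap f (rep z) x j - wordMap f (rep z') x j|
          ≤ 6 * Metric.diam K * ρ := by
        rw [← Real.dist_eq]
        exact (dist_le_pi_dist _ _ j).trans hdistc
      have habsle : |wordMap f (rep z) x j / s0 - wordMap f (rep z') x j / s0|
          ≤ 3 / cmin := by
        rw [div_sub_div_same, abs_div, abs_of_pos hs0]
        rw [div_le_div_iff₀ hs0 hcmin0, hs0def]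
        nlinarith [hcoord, hcmin0, hρ0, hDpos]
      have hKle : 3 / cmin ≤ (K₀ : ℝ) := by
        rw [hK₀def]
        push_cast
        calc 3 / cmin ≤ (⌈3 / cmin⌉₊ : ℝ) := Nat.le_ceil _
        _ ≤ (⌈3 / cmin⌉₊ : ℝ) + 1 := by linarith
      have := floor_mem_Icc_of_abs_sub_le habsle hKle
      rw [← hGz, ← hGz']
      simp only [hGdef]
      exact this
    calc (Z.filter fun z' => ¬ Disjoint (Bz z) (Bz z')).card
        ≤ (Fintype.piFinset (fun j => Finset.Icc (z j - (K₀ : ℤ)) (z j + (K₀ : ℤ)))).card :=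
          Finset.card_le_card hsub
    _ = ∏ j : Fin d, (Finset.Icc (z j - (K₀ : ℤ)) (z j + (K₀ : ℤ))).card :=
        Fintype.card_piFinset _
    _ = Δ := by
        have hcard : ∀ j : Fin d, (Finset.Icc (z j - (K₀ : ℤ)) (z j + (K₀ : ℤ))).card
            = 2 * K₀ + 1 := by
          intro j
          rw [Int.card_Icc]
          omega
        rw [Finset.prod_congr rfl (fun j _ => hcard j), Finset.prod_const, Finset.card_univ,
          Fintype.card_fin, hΔdef]
    _ ≤ Δ + 1 := Nat.le_succ Δ
  have hv_le : ∀ z ∈ Z, v z ≤ μ (Bz z) := fun z hz => (hrep z hz).2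
  obtain ⟨S, hSZ, hSdisj, hSsum⟩ := greedy_select μ Bz
    (fun z => measurableSet_closedBall) v (Δ + 1) Z hdeg hv_le
  -- conclusion
  refine ⟨S.image rep, ?_, ?_, ?_, ?_⟩
  · intro w hw
    obtain ⟨z, hzS, rfl⟩ := Finset.mem_image.1 hw
    exact hlen _ (hWsect ((hrep z (hSZ hzS)).1.1))
  · intro w hw
    obtain ⟨z, hzS, rfl⟩ := Finset.mem_image.1 hw
    exact hball_sub _ ((hrep z (hSZ hzS)).1.1)
  · intro w hw w' hw' hne
    obtain ⟨z, hzS, rfl⟩ := Finset.mem_image.1 (Finset.mem_coe.1 hw)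
    obtain ⟨z', hz'S, rfl⟩ := Finset.mem_image.1 (Finset.mem_coe.1 hw')
    have hzz' : z ≠ z' := fun h => hne (by rw [h])
    exact hSdisj (Finset.mem_coe.2 hzS) (Finset.mem_coe.2 hz'S) hzz'
  · have hUeq : ⋃ w ∈ S.image rep, wordBall f cr K x w = ⋃ z ∈ S, Bz z := by
      ext y
      simp only [Set.mem_iUnion, Finset.mem_image, exists_prop]
      constructor
      · rintro ⟨w, ⟨z, hzS, rfl⟩, hy⟩
        exact ⟨z, hzS, hy⟩
      · rintro ⟨z, hzS, hy⟩
        exact ⟨rep z, ⟨z, hzS, rfl⟩, hy⟩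
    rw [hUeq]
    have hfib : ∑ w ∈ W, Pw p w = ∑ z ∈ Z, v z := by
      rw [hZdef, hvdef]
      exact (Finset.sum_fiberwise_of_maps_to (fun w hw => Finset.mem_image_of_mem G hw)
        (Pw p)).symm
    have hchain : μ Ω ≤ (2 * (Δ + 1) : ℕ) * μ (⋃ z ∈ S, Bz z) := by
      calc μ Ω ≤ 2 * μ A := hμΩA
      _ ≤ 2 * ∑ w ∈ W, Pw p w := mul_le_mul_right hμA_le 2
      _ = 2 * ∑ z ∈ Z, v z := by rw [hfib]
      _ ≤ 2 * (((Δ + 1 : ℕ) : ℝ≥0∞) * μ (⋃ z ∈ S, Bz z)) := mul_le_mul_right hSsum 2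
      _ = (2 * (Δ + 1) : ℕ) * μ (⋃ z ∈ S, Bz z) := by
          push_cast
          ring
    calc C * μ Ω ≤ C * ((2 * (Δ + 1) : ℕ) * μ (⋃ z ∈ S, Bz z)) := mul_le_mul_right hchain C
    _ = (C * (2 * (Δ + 1) : ℕ)) * μ (⋃ z ∈ S, Bz z) := by rw [mul_assoc]
    _ = 1 * μ (⋃ z ∈ S, Bz z) := by
        rw [hCdef, ENNReal.inv_mul_cancel (Nat.cast_ne_zero.2 (by omega))
          (ENNReal.natCast_ne_top _)]
    _ = μ (⋃ z ∈ S, Bz z) := one_mul _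
end

section
/- Let μ be a Borel probability measure on ℝ^d without atoms and supported in [0,1]. Then the sequence of balls (B(p/q, 1/q²)) indexed by coprime pairs (p,q) with 0≤p≤q, q≥1 (ordered with q nondecreasing) is μ-asymptotically covering. -/
open MeasureTheory Metric Set Filter
open scoped ENNReal Topology

lemma icc_disj {a b c d : ℝ} (h : b < c) : Disjoint (Set.Icc a b) (Set.Icc c d) :=
  Set.disjoint_left.2 fun _x hx hx' => absurd (hx.2.trans_lt h) (not_lt.2 hx'.1)

lemma sel {ι : Type*} [DecidableEq ι] (l r : ι → ℝ) :
    ∀ (n : ℕ) (S : Finset ι), S.card ≤ n → ∀ q : ℝ,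
    ∃ F₁ F₂ : Finset ι, F₁ ⊆ S ∧ F₂ ⊆ S ∧
      ((F₁ : Set ι).Pairwise fun a b => Disjoint (Icc (l a) (r a)) (Icc (l b) (r b))) ∧
      ((F₂ : Set ι).Pairwise fun a b => Disjoint (Icc (l a) (r a)) (Icc (l b) (r b))) ∧
      (∀ i ∈ F₂, q < l i) ∧
      ((⋃ i ∈ S, Icc (l i) (r i)) ⊆
        (Iic q ∪ ⋃ i ∈ F₁, Icc (l i) (r i)) ∪ ⋃ i ∈ F₂, Icc (l i) (r i)) := by
  intro n
  induction n with
  | zero =>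
    intro S hS q
    have : S = ∅ := Finset.card_eq_zero.1 (Nat.le_zero.1 hS)
    subst this
    exact ⟨∅, ∅, by simp, by simp, by simp, by simp, by simp, by simp⟩
  | succ n ih =>
    intro S hS q
    rcases S.eq_empty_or_nonempty with rfl | hne
    · exact ⟨∅, ∅, by simp, by simp, by simp, by simp, by simp, by simp⟩
    set q₁ := max q (S.inf' hne l) with hq₁
    have hqle : q ≤ q₁ := le_max_left _ _
    obtain ⟨i₀, hi₀S, hi₀⟩ := S.exists_mem_eq_inf' hne l
    have hTne : ∃ i ∈ S, l i ≤ q₁ := ⟨i₀, hi₀S, by rw [← hi₀]; exact le_max_right _ _⟩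
    set T := S.filter (fun i => l i ≤ q₁) with hT
    have hTne' : T.Nonempty := by
      obtain ⟨i, hiS, hi⟩ := hTne
      exact ⟨i, Finset.mem_filter.2 ⟨hiS, hi⟩⟩
    obtain ⟨I, hIT, hImax⟩ := T.exists_max_image r hTne'
    have hIS : I ∈ S := (Finset.mem_filter.1 hIT).1
    have hIl : l I ≤ q₁ := (Finset.mem_filter.1 hIT).2
    set S' := S.filter (fun i => q₁ < l i) with hS'
    have hS'card : S'.card ≤ n := by
      have hsub : S' ⊆ S.erase I := by
        intro i hi
        rcases Finset.mem_filter.1 hi with ⟨hiS, hil⟩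
        refine Finset.mem_erase.2 ⟨?_, hiS⟩
        rintro rfl
        exact absurd hil (not_lt.2 hIl)
      calc S'.card ≤ (S.erase I).card := Finset.card_le_card hsub
        _ = S.card - 1 := Finset.card_erase_of_mem hIS
        _ ≤ n := by omega
    obtain ⟨F₁', F₂', h₁S, h₂S, h₁d, h₂d, h₂l, hcov⟩ := ih S' hS'card (r I)
    refine ⟨insert I F₂', F₁', ?_, h₁S.trans (Finset.filter_subset _ _), ?_, h₁d, ?_, ?_⟩
    · exact Finset.insert_subset hIS (h₂S.trans (Finset.filter_subset _ _))
    · rw [Finset.coe_insert]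
      haveI : Std.Symm (fun a b : ι => Disjoint (Icc (l a) (r a)) (Icc (l b) (r b))) :=
        ⟨fun a b h => h.symm⟩
      refine Set.pairwise_insert_of_symm.2 ⟨h₂d, fun J hJ _ => ?_⟩
      exact icc_disj (h₂l J hJ)
    · intro i hi
      exact lt_of_le_of_lt hqle (Finset.mem_filter.1 (h₁S hi)).2
    · intro y hy
      obtain ⟨j, hjS, hyj⟩ := Set.mem_iUnion₂.1 hy
      by_cases hyq : y ≤ q
      · exact Or.inl (Or.inl hyq)
      push_neg at hyq
      have hmemI : y ∈ Icc (l I) (r I) → y ∈ (Iic q ∪ ⋃ i ∈ insert I F₂', Icc (l i) (r i)) ∪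
          ⋃ i ∈ F₁', Icc (l i) (r i) := fun h =>
        Or.inl (Or.inr (Set.mem_biUnion (Finset.mem_insert_self I F₂') h))
      by_cases hjT : l j ≤ q₁
      · have hrj : r j ≤ r I := hImax j (Finset.mem_filter.2 ⟨hjS, hjT⟩)
        have hlI : l I ≤ y := by
          rcases le_or_gt y q₁ with h | h
          · have hq₁eq : q₁ = S.inf' hne l := by
              rcases max_cases q (S.inf' hne l) with ⟨h1, _⟩ | ⟨h1, _⟩
              · exact absurd (lt_of_lt_of_le hyq (h.trans_eq h1)) (lt_irrefl q)
              · exact h1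
            have h2 : q₁ ≤ l j := hq₁eq ▸ Finset.inf'_le l hjS
            have h3 : y = q₁ := le_antisymm h (h2.trans hyj.1)
            rw [h3]; exact hIl
          · exact hIl.trans h.le
        exact hmemI ⟨hlI, hyj.2.trans hrj⟩
      · push_neg at hjT
        have hj' : j ∈ S' := Finset.mem_filter.2 ⟨hjS, hjT⟩
        rcases hcov (Set.mem_biUnion hj' hyj) with (h | h) | h
        · exact hmemI ⟨hIl.trans (hjT.le.trans hyj.1), h⟩
        · exact Or.inr h
        · obtain ⟨i, hi, hyi⟩ := Set.mem_iUnion₂.1 h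
          exact Or.inl (Or.inr (Set.mem_biUnion (Finset.mem_insert_of_mem hi) hyi))


lemma exists_den_ge {ξ : ℝ} (hξ : Irrational ξ) (M : ℕ) :
    ∃ ρ : ℚ, |ξ - ρ| < 1 / (ρ.den : ℝ) ^ 2 ∧ M ≤ ρ.den := by
  by_contra hcon
  push_neg at hcon
  have hfin : {q : ℚ | |ξ - q| < 1 / (q.den : ℝ) ^ 2}.Finite := by
    set N : ℤ := ⌈(|ξ| + 1) * M⌉ with hN
    apply Set.Finite.subset (Set.Finite.image (fun z : ℤ × ℕ => (z.1 : ℚ) / (z.2 : ℚ))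
      ((Set.finite_Icc (-N) N).prod (Set.finite_Icc 1 M)))
    intro q hq
    have hq' : |ξ - (q : ℝ)| < 1 / (q.den : ℝ) ^ 2 := hq
    have hden : q.den < M := hcon q hq'
    have hden1 : 1 ≤ q.den := q.den_pos
    have hden1R : (1 : ℝ) ≤ (q.den : ℝ) := by exact_mod_cast hden1
    have hq1 : |ξ - (q : ℝ)| < 1 := by
      refine hq'.trans_le ?_
      rw [div_le_one (by positivity)]
      nlinarith
    have habs : |(q : ℝ)| ≤ |ξ| + 1 := by
      have h1 : |(q : ℝ)| ≤ |ξ| + |ξ - q| := by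
        have := abs_add_le ξ ((q : ℝ) - ξ)
        simp only [add_sub_cancel] at this
        rw [abs_sub_comm] at this
        exact this
      linarith [h1, hq1.le]
    have hnum : |(q.num : ℝ)| ≤ (|ξ| + 1) * M := by
      have hcast : (q.num : ℝ) = (q : ℝ) * (q.den : ℝ) := by
        rw [Rat.cast_def]; field_simp
      rw [hcast, abs_mul, abs_of_nonneg (by positivity : (0:ℝ) ≤ (q.den : ℝ))]
      have hdM : (q.den : ℝ) ≤ (M : ℝ) := by exact_mod_cast hden.le
      exact mul_le_mul habs hdM (by positivity) (by positivity)
    refine ⟨(q.num, q.den), ⟨?_, ?_⟩, ?_⟩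
    · simp only [Set.mem_Icc]
      have h2 : |(q.num : ℝ)| ≤ (N : ℝ) := hnum.trans (Int.le_ceil _)
      have h3 : |q.num| ≤ N := by exact_mod_cast h2
      exact abs_le.1 h3
    · simp only [Set.mem_Icc]; exact ⟨hden1, hden.le⟩
    · simp [Rat.num_div_den]
  exact Real.infinite_rat_abs_sub_lt_one_div_den_sq_of_irrational hξ hfin

lemma exists_good_pair (g : ℕ) {Ω : Set ℝ} (hΩ : IsOpen Ω) {x : ℝ} (hx : Irrational x)
    (hxΩ : x ∈ Ω) (hx0 : 0 < x) (hx1 : x < 1) :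
    ∃ pq : ℕ × ℕ, (g ≤ pq.2 ∧ 1 ≤ pq.2 ∧ pq.1 ≤ pq.2 ∧ Nat.Coprime pq.1 pq.2) ∧
      Metric.closedBall ((pq.1 : ℝ) / pq.2) (1 / (pq.2 : ℝ) ^ 2) ⊆ Ω ∧
      x ∈ Metric.ball ((pq.1 : ℝ) / pq.2) (1 / (pq.2 : ℝ) ^ 2) := by
  obtain ⟨ε, hε, hball⟩ := Metric.isOpen_iff.1 hΩ x hxΩ
  obtain ⟨M, hM⟩ := exists_nat_gt (max (max (2 / ε) (g : ℝ)) (max (1 / x) (1 / (1 - x))))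
  have hMx : 1 / x < (M : ℝ) := lt_of_le_of_lt (le_max_left _ _ |>.trans (le_max_right _ _)) hM
  have hM1x : 1 / (1 - x) < (M : ℝ) :=
    lt_of_le_of_lt (le_max_right _ _ |>.trans (le_max_right _ _)) hM
  have hMε : 2 / ε < (M : ℝ) := lt_of_le_of_lt (le_max_left _ _ |>.trans (le_max_left _ _)) hM
  have hMg : (g : ℝ) < (M : ℝ) := lt_of_le_of_lt (le_max_right _ _ |>.trans (le_max_left _ _)) hM
  have hMpos : (0 : ℝ) < M := lt_trans (by positivity) hMx
  obtain ⟨ρ, hρ, hρden⟩ := exists_den_ge hx M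
  have hd1 : 1 ≤ ρ.den := ρ.den_pos
  have hdM : (M : ℝ) ≤ (ρ.den : ℝ) := by exact_mod_cast hρden
  have hdR : (1 : ℝ) ≤ (ρ.den : ℝ) := by exact_mod_cast hd1
  have hd2 : (M : ℝ) ≤ (ρ.den : ℝ) ^ 2 := by nlinarith
  have hinv : 1 / (ρ.den : ℝ) ^ 2 ≤ 1 / (M : ℝ) := by
    apply one_div_le_one_div_of_le hMpos hd2
  have hxM : 1 / (M : ℝ) < x := by
    rw [div_lt_iff₀ hx0] at hMx
    rw [div_lt_iff₀ hMpos]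
    nlinarith
  have hxM1 : 1 / (M : ℝ) < 1 - x := by
    have h1x : 0 < 1 - x := by linarith
    rw [div_lt_iff₀ h1x] at hM1x
    rw [div_lt_iff₀ hMpos]
    nlinarith
  have hc0 : (0 : ℝ) < (ρ : ℝ) := by
    have := abs_lt.1 hρ
    have h2 : 1 / (ρ.den : ℝ) ^ 2 < x := lt_of_le_of_lt hinv hxM
    linarith [this.2]
  have hc1 : ((ρ : ℝ)) < 1 := by
    have := abs_lt.1 hρ
    have h2 : 1 / (ρ.den : ℝ) ^ 2 < 1 - x := lt_of_le_of_lt hinv hxM1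
    linarith [this.1]
  have hρ0 : 0 < ρ := by exact_mod_cast hc0
  have hρ1 : ρ < 1 := by exact_mod_cast hc1
  have hnum0 : 0 ≤ ρ.num := (Rat.num_pos.2 hρ0).le
  have hnumden : ρ.num < (ρ.den : ℤ) := by exact_mod_cast Rat.num_lt_denom_iff.2 hρ1
  refine ⟨(ρ.num.toNat, ρ.den), ⟨?_, hd1, ?_, ?_⟩, ?_, ?_⟩
  · exact_mod_cast (hMg.trans_le hdM).le
  · omega
  · have : ρ.num.toNat = ρ.num.natAbs := by omega
    rw [this]; exact ρ.reduced
  · -- closed ball ⊆ Ω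
    have hcenter : ((ρ.num.toNat : ℝ) / (ρ.den : ℝ)) = (ρ : ℝ) := by
      rw [Rat.cast_def]
      congr 1
      exact_mod_cast congrArg (fun z : ℤ => (z : ℝ)) (Int.toNat_of_nonneg hnum0)
    intro y hy
    apply hball
    rw [Metric.mem_ball, Real.dist_eq]
    rw [Metric.mem_closedBall, Real.dist_eq, hcenter] at hy
    have hy' : |y - (ρ : ℝ)| ≤ 1 / (ρ.den : ℝ) ^ 2 := hy
    have hxc : |x - (ρ : ℝ)| < 1 / (ρ.den : ℝ) ^ 2 := hρ
    have h2M : 2 / (M : ℝ) < ε := by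
      rw [div_lt_iff₀ hε] at hMε
      rw [div_lt_iff₀ hMpos]
      nlinarith
    have : |y - x| ≤ |y - (ρ : ℝ)| + |(ρ : ℝ) - x| := abs_sub_le _ _ _
    rw [abs_sub_comm (ρ : ℝ) x] at this
    have hle : |y - x| < 2 / (ρ.den : ℝ) ^ 2 := by
      have h4 : |y - x| ≤ 1 / (ρ.den : ℝ) ^ 2 + |x - (ρ : ℝ)| := by linarith
      have h5 : 2 / (ρ.den : ℝ) ^ 2 = 1 / (ρ.den : ℝ) ^ 2 + 1 / (ρ.den : ℝ) ^ 2 := by ring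
      linarith
    have h2d : 2 / (ρ.den : ℝ) ^ 2 ≤ 2 / (M : ℝ) := by
      apply div_le_div_of_nonneg_left (by norm_num) hMpos hd2
    linarith
  · have hcenter : ((ρ.num.toNat : ℝ) / (ρ.den : ℝ)) = (ρ : ℝ) := by
      rw [Rat.cast_def]
      congr 1
      exact_mod_cast congrArg (fun z : ℤ => (z : ℝ)) (Int.toNat_of_nonneg hnum0)
    rw [Metric.mem_ball, Real.dist_eq, hcenter]
    exact hρ


/-- for an atomless Borel probability measure `μ` supported in `[0,1]`, the
family of balls `B(p/q, 1/q²)`, indexed by coprime pairs `(p,q)` with `0 ≤ p ≤ q`,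
`q ≥ 1`, is `μ`-asymptotically covering (lower index bound read on `q`). -/
theorem stmt19 (μ : Measure ℝ) [IsProbabilityMeasure μ]
    (hatomless : ∀ t : ℝ, μ {t} = 0) (hsupp : μ (Set.Icc (0 : ℝ) 1) = 1) :
    ∃ C : ℝ≥0∞, 0 < C ∧ ∀ Ω : Set ℝ, IsOpen Ω → ∀ g : ℕ,
      ∃ F : Finset (ℕ × ℕ),
        (∀ pq ∈ F, g ≤ pq.2 ∧ 1 ≤ pq.2 ∧ pq.1 ≤ pq.2 ∧ Nat.Coprime pq.1 pq.2) ∧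
        (∀ pq ∈ F, closedBall ((pq.1 : ℝ) / pq.2) (1 / (pq.2 : ℝ) ^ 2) ⊆ Ω) ∧
        ((F : Set (ℕ × ℕ)).Pairwise fun a b =>
          Disjoint (closedBall ((a.1 : ℝ) / a.2) (1 / (a.2 : ℝ) ^ 2))
            (closedBall ((b.1 : ℝ) / b.2) (1 / (b.2 : ℝ) ^ 2))) ∧
        C * μ Ω ≤ μ (⋃ pq ∈ F, closedBall ((pq.1 : ℝ) / pq.2) (1 / (pq.2 : ℝ) ^ 2)) := by
  haveI : NullSingletonClass μ := ⟨hatomless⟩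
  refine ⟨1/4, by norm_num, fun Ω hΩ g => ?_⟩
  by_cases hμΩ : μ Ω = 0
  · exact ⟨∅, by simp, by simp, by simp, by simp [hμΩ]⟩
  have hQ0 : μ (Set.range ((↑) : ℚ → ℝ)) = 0 := (Set.countable_range _).measure_zero μ
  set D : Set ℝ := (Ω ∩ Icc (0:ℝ) 1) \ Set.range ((↑) : ℚ → ℝ) with hDdef
  have hDm : MeasurableSet D :=
    (hΩ.measurableSet.inter measurableSet_Icc).diff (Set.countable_range _).measurableSet
  have hIcc : μ (Ω ∩ Icc (0:ℝ) 1) = μ Ω := by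
    apply measure_inter_conull
    rw [measure_compl measurableSet_Icc (measure_ne_top μ _), hsupp, measure_univ]
    simp
  have hμD : μ D = μ Ω := by rw [hDdef, measure_diff_null hQ0, hIcc]
  have hhalf : μ D / 2 < μ D :=
    ENNReal.half_lt_self (by rwa [hμD]) (measure_ne_top μ D)
  obtain ⟨K, hKD, hKc, hKμ⟩ := hDm.exists_lt_isCompact hhalf
  have hpt : ∀ x ∈ K, ∃ pq : ℕ × ℕ,
      (g ≤ pq.2 ∧ 1 ≤ pq.2 ∧ pq.1 ≤ pq.2 ∧ Nat.Coprime pq.1 pq.2) ∧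
      closedBall ((pq.1 : ℝ) / pq.2) (1 / (pq.2 : ℝ) ^ 2) ⊆ Ω ∧
      x ∈ ball ((pq.1 : ℝ) / pq.2) (1 / (pq.2 : ℝ) ^ 2) := by
    intro x hxK
    have hxD := hKD hxK
    have hxIrr : Irrational x := hxD.2
    have hxΩ : x ∈ Ω := hxD.1.1
    have hx01 : x ∈ Icc (0:ℝ) 1 := hxD.1.2
    have hx0 : 0 < x := lt_of_le_of_ne hx01.1 (fun h => hxIrr ⟨0, by simp [← h]⟩)
    have hx1 : x < 1 := lt_of_le_of_ne hx01.2 (fun h => hxIrr ⟨1, by simp [h]⟩)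
    exact exists_good_pair g hΩ hxIrr hxΩ hx0 hx1
  choose! f hf1 hf2 hf3 using hpt
  -- finite subcover
  obtain ⟨t, ht⟩ := hKc.elim_finite_subcover
    (fun x : K => ball (((f x).1 : ℝ) / (f x).2) (1 / ((f x).2 : ℝ) ^ 2))
    (fun x => isOpen_ball)
    (fun x hx => Set.mem_iUnion.2 ⟨⟨x, hx⟩, hf3 x hx⟩)
  set G : Finset (ℕ × ℕ) := t.image (fun x : K => f x) with hGdef
  have hGprop : ∀ pq ∈ G, (g ≤ pq.2 ∧ 1 ≤ pq.2 ∧ pq.1 ≤ pq.2 ∧ Nat.Coprime pq.1 pq.2) ∧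
      closedBall ((pq.1 : ℝ) / pq.2) (1 / (pq.2 : ℝ) ^ 2) ⊆ Ω := by
    intro pq hpq
    obtain ⟨x, _, rfl⟩ := Finset.mem_image.1 hpq
    exact ⟨hf1 x x.2, hf2 x x.2⟩
  -- interval endpoints
  set lf : ℕ × ℕ → ℝ := fun pq => (pq.1 : ℝ) / pq.2 - 1 / (pq.2 : ℝ) ^ 2 with hlf
  set rf : ℕ × ℕ → ℝ := fun pq => (pq.1 : ℝ) / pq.2 + 1 / (pq.2 : ℝ) ^ 2 with hrf
  have hIccCB : ∀ pq : ℕ × ℕ,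
      Icc (lf pq) (rf pq) = closedBall ((pq.1 : ℝ) / pq.2) (1 / (pq.2 : ℝ) ^ 2) := by
    intro pq; rw [Real.closedBall_eq_Icc]
  have hKG : K ⊆ ⋃ pq ∈ G, Icc (lf pq) (rf pq) := by
    intro x hx
    obtain ⟨i, hit, hxi⟩ := Set.mem_iUnion₂.1 (ht hx)
    refine Set.mem_biUnion (Finset.mem_image_of_mem _ hit) ?_
    rw [hIccCB]
    exact ball_subset_closedBall hxi
  obtain ⟨F₁, F₂, hF₁G, hF₂G, hF₁d, hF₂d, -, hcov⟩ := sel lf rf G.card G le_rfl (-2)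
  have hKsub : K ⊆ (⋃ pq ∈ F₁, Icc (lf pq) (rf pq)) ∪ ⋃ pq ∈ F₂, Icc (lf pq) (rf pq) := by
    intro x hx
    rcases hcov (hKG hx) with (h | h) | h
    · exfalso
      have hx0 : (0:ℝ) ≤ x := ((hKD hx).1.2).1
      have : x ≤ -2 := h
      linarith
    · exact Or.inl h
    · exact Or.inr h
  have hμK : μ K ≤ μ (⋃ pq ∈ F₁, Icc (lf pq) (rf pq)) + μ (⋃ pq ∈ F₂, Icc (lf pq) (rf pq)) :=
    le_trans (measure_mono hKsub) (measure_union_le _ _)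
  -- choose the better family
  rcases le_total (μ (⋃ pq ∈ F₂, Icc (lf pq) (rf pq))) (μ (⋃ pq ∈ F₁, Icc (lf pq) (rf pq)))
    with hbest | hbest
  case _ =>
    refine ⟨F₁, fun pq hpq => (hGprop pq (hF₁G hpq)).1, fun pq hpq => (hGprop pq (hF₁G hpq)).2,
      ?_, ?_⟩
    · intro a ha b hb hab
      have h := hF₁d ha hb hab
      rw [← hIccCB a, ← hIccCB b]
      exact h
    · have hKF : μ K ≤ 2 * μ (⋃ pq ∈ F₁, Icc (lf pq) (rf pq)) := by
        rw [two_mul]; exact hμK.trans (add_le_add le_rfl hbest)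
      calc (1/4 : ℝ≥0∞) * μ Ω = 1/4 * μ D := by rw [hμD]
        _ ≤ 1/4 * (2 * μ K) := by
            apply mul_le_mul_right
            calc μ D = μ D / 2 + μ D / 2 := (ENNReal.add_halves _).symm
              _ ≤ μ K + μ K := add_le_add hKμ.le hKμ.le
              _ = 2 * μ K := (two_mul _).symm
        _ ≤ 1/4 * (2 * (2 * μ (⋃ pq ∈ F₁, Icc (lf pq) (rf pq)))) := by
            exact mul_le_mul_right (mul_le_mul_right hKF _) _
        _ = μ (⋃ pq ∈ F₁, Icc (lf pq) (rf pq)) := by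
            rw [← mul_assoc, ← mul_assoc]
            rw [show (1/4 : ℝ≥0∞) * 2 * 2 = 1 by
              rw [one_div, mul_assoc]
              rw [show (2:ℝ≥0∞) * 2 = 4 by norm_num]
              exact ENNReal.inv_mul_cancel (by norm_num) (by norm_num)]
            rw [one_mul]
        _ = μ (⋃ pq ∈ F₁, closedBall ((pq.1 : ℝ) / pq.2) (1 / (pq.2 : ℝ) ^ 2)) := by
            congr 1
            exact Set.iUnion₂_congr fun pq _ => hIccCB pq
  case _ =>
    refine ⟨F₂, fun pq hpq => (hGprop pq (hF₂G hpq)).1, fun pq hpq => (hGprop pq (hF₂G hpq)).2,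
      ?_, ?_⟩
    · intro a ha b hb hab
      have h := hF₂d ha hb hab
      rw [← hIccCB a, ← hIccCB b]
      exact h
    · have hKF : μ K ≤ 2 * μ (⋃ pq ∈ F₂, Icc (lf pq) (rf pq)) := by
        rw [two_mul]; exact hμK.trans (add_le_add hbest le_rfl)
      calc (1/4 : ℝ≥0∞) * μ Ω = 1/4 * μ D := by rw [hμD]
        _ ≤ 1/4 * (2 * μ K) := by
            apply mul_le_mul_right
            calc μ D = μ D / 2 + μ D / 2 := (ENNReal.add_halves _).symm
              _ ≤ μ K + μ K := add_le_add hKμ.le hKμ.le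
              _ = 2 * μ K := (two_mul _).symm
        _ ≤ 1/4 * (2 * (2 * μ (⋃ pq ∈ F₂, Icc (lf pq) (rf pq)))) := by
            exact mul_le_mul_right (mul_le_mul_right hKF _) _
        _ = μ (⋃ pq ∈ F₂, Icc (lf pq) (rf pq)) := by
            rw [← mul_assoc, ← mul_assoc]
            rw [show (1/4 : ℝ≥0∞) * 2 * 2 = 1 by
              rw [one_div, mul_assoc]
              rw [show (2:ℝ≥0∞) * 2 = 4 by norm_num]
              exact ENNReal.inv_mul_cancel (by norm_num) (by norm_num)]
            rw [one_mul]
        _ = μ (⋃ pq ∈ F₂, closedBall ((pq.1 : ℝ) / pq.2) (1 / (pq.2 : ℝ) ^ 2)) := by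
            congr 1
            exact Set.iUnion₂_congr fun pq _ => hIccCB pq
end
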